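/- A compact Riemann surface of genus greater than 3 cannot admit both a degree-2 holomorphic map onto the Riemann sphere and a degree-2 holomorphic map onto an elliptic curve (i.e., it cannot be simultaneously hyperelliptic and bielliptic). -/
import Mathlib

/-- An abstract theory of compact Riemann surfaces: each surface has a genus,
nonconstant holomorphic maps have a positive degree and a total ramification
contribution `ramSum f = Σ (rᵢ − 1)` over the (finitely many) ramification
points, and the Riemann–Hurwitz formula, multiplicativity of the degree under
composition, and the Castelnuovo–Severi inequality hold.  A map is unramified
iff `ramSum f = 0`. -/
structure RiemannSurfaceTheory where
  Surface : Type
  genus : Surface → ℕ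
  /-- nonconstant holomorphic maps between compact Riemann surfaces -/
  Hol : Surface → Surface → Type
  deg : {X Y : Surface} → Hol X Y → ℕ
  /-- total ramification `Σ (rᵢ − 1)` over the ramification points of `f` -/
  ramSum : {X Y : Surface} → Hol X Y → ℕ
  deg_pos : ∀ {X Y : Surface} (f : Hol X Y), 0 < deg f
  /-- Riemann–Hurwitz: `2 g(X) − 2 = (deg f)(2 g(Y) − 2) + Σ (rᵢ − 1)` -/
  riemannHurwitz : ∀ {X Y : Surface} (f : Hol X Y),
    2 * (genus X : ℤ) - 2 = (deg f : ℤ) * (2 * (genus Y : ℤ) - 2) + (ramSum f : ℤ)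
  comp : {X Y Z : Surface} → Hol Y Z → Hol X Y → Hol X Z
  deg_comp : ∀ {X Y Z : Surface} (g : Hol Y Z) (f : Hol X Y),
    deg (comp g f) = deg g * deg f
  /-- biholomorphic equivalence of compact Riemann surfaces -/
  Isom : Surface → Surface → Prop
  isom_of_deg_one : ∀ {X Y : Surface} (f : Hol X Y), deg f = 1 → Isom X Y
  isom_symm : ∀ {X Y : Surface}, Isom X Y → Isom Y X
  isom_trans : ∀ {X Y Z : Surface}, Isom X Y → Isom Y Z → Isom X Z
  genus_eq_of_isom : ∀ {X Y : Surface}, Isom X Y → genus X = genus Y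
  /-- the Riemann sphere `ℂP¹` -/
  sphere : Surface
  genus_sphere : genus sphere = 0
  /-- Castelnuovo–Severi inequality -/
  castelnuovoSeveri : ∀ {X₀ X₁ X₂ : Surface} (f₁ : Hol X₀ X₁) (f₂ : Hol X₀ X₂),
    (¬ ∃ (X' : Surface) (h : Hol X₀ X') (f₁' : Hol X' X₁) (f₂' : Hol X' X₂),
        genus X' < genus X₀ ∧ f₁ = comp f₁' h ∧ f₂ = comp f₂' h) →
    genus X₀ ≤ deg f₁ * genus X₁ + deg f₂ * genus X₂ + (deg f₁ - 1) * (deg f₂ - 1)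

/-- A compact Riemann surface of genus greater than 3 cannot admit both a
degree-2 holomorphic map onto the Riemann sphere and a degree-2 holomorphic map onto
an elliptic curve; equivalently, if it admits both, its genus is at most 3. -/
theorem not_hyperelliptic_and_bielliptic_of_genus_gt_three
    (T : RiemannSurfaceTheory) (C E : T.Surface)
    (f₁ : T.Hol C T.sphere) (f₂ : T.Hol C E)
    (hE : T.genus E = 1) (h₁ : T.deg f₁ = 2) (h₂ : T.deg f₂ = 2) :
    T.genus C ≤ 3 := by
  have key := T.castelnuovoSeveri f₁ f₂ ?_
  · rw [h₁, h₂, T.genus_sphere, hE] at key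
    omega
  · rintro ⟨X', h, f₁', f₂', hlt, e₁, e₂⟩
    have d1 : T.deg f₁' * T.deg h = 2 := by rw [← T.deg_comp, ← e₁, h₁]
    have d2 : T.deg f₂' * T.deg h = 2 := by rw [← T.deg_comp, ← e₂, h₂]
    have hp1 := T.deg_pos f₁'
    have hp2 := T.deg_pos f₂'
    have hpos := T.deg_pos h
    have hdvd : T.deg h ∣ 2 := ⟨T.deg f₁', by rw [← d1, mul_comm]⟩
    have hle : T.deg h ≤ 2 := Nat.le_of_dvd (by norm_num) hdvd
    have : T.deg h = 1 ∨ T.deg h = 2 := by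
      interval_cases (T.deg h) <;> omega
    rcases this with hd | hd
    · have := T.genus_eq_of_isom (T.isom_of_deg_one h hd)
      omega
    · rw [hd] at d1 d2
      have e1 : T.deg f₁' = 1 := by omega
      have e2 : T.deg f₂' = 1 := by omega
      have i1 := T.isom_of_deg_one f₁' e1
      have i2 := T.isom_of_deg_one f₂' e2
      have := T.genus_eq_of_isom (T.isom_trans (T.isom_symm i1) i2)
      rw [T.genus_sphere, hE] at this
      exact absurd this (by omega)
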